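/- arXiv:2012.15437 — 6 statements merged into one kernel-verified Lean document; each statement's English description precedes it below -/
import Mathlib

section
/- Let p(z) = a_n z^n + ... + a_1 z + a_0 be a univariate real polynomial. If z_1 and z_2 are two distinct real roots of p, and every real root of p in the open interval (z_1, z_2) has even multiplicity, then p'(z_1) · p'(z_2) ≤ 0. -/
/-!
Near a root `c` of multiplicity `m`, `p = (X - c)^m q` with `q(c) ≠ 0`, so for even `m` the
polynomial `p` keeps the sign of `q(c)` on a whole neighbourhood of `c`; off the roots this is plain
continuity. On the connected interval `(z₁, z₂)` the open sets where `p ≥ 0` resp. `p ≤ 0` locally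
can only overlap where `p` vanishes on an open set, so `p` has one sign on all of `(z₁, z₂)`. Since
`p(z₁) = p(z₂) = 0`, the one-sided difference quotients of `p` at `z₁` and at `z₂` then have
opposite signs.
-/

open Polynomial Set Filter Topology

namespace Polynomial

theorem eventually_nonneg_or_eventually_nonpos_of_even_rootMultiplicity {p : ℝ[X]} {c : ℝ}
    (hc : Even (p.rootMultiplicity c)) :
    (∀ᶠ x in 𝓝 c, 0 ≤ p.eval x) ∨ ∀ᶠ x in 𝓝 c, p.eval x ≤ 0 := by
  rcases eq_or_ne p 0 with rfl | hp
  · simp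
  set q := p /ₘ (X - C c) ^ p.rootMultiplicity c
  have hfactor (x : ℝ) : p.eval x = (x - c) ^ p.rootMultiplicity c * q.eval x := by
    conv_lhs => rw [← p.pow_mul_divByMonic_rootMultiplicity_eq c]
    simp only [eval_mul, eval_pow, eval_sub, eval_X, eval_C, q]
  have hq_cont : ContinuousAt q.eval c := q.continuous.continuousAt
  rcases (eval_divByMonic_pow_rootMultiplicity_ne_zero c hp).lt_or_gt with hneg | hpos
  · right
    filter_upwards [hq_cont.eventually (gt_mem_nhds hneg)] with x hx
    rw [hfactor]
    exact mul_nonpos_of_nonneg_of_nonpos (hc.pow_nonneg _) hx.le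
  · left
    filter_upwards [hq_cont.eventually (lt_mem_nhds hpos)] with x hx
    rw [hfactor]
    exact mul_nonneg (hc.pow_nonneg _) hx.le

theorem nonneg_or_nonpos_on_of_even_rootMultiplicity {p : ℝ[X]} {s : Set ℝ}
    (hs : IsPreconnected s) (heven : ∀ x ∈ s, Even (p.rootMultiplicity x)) :
    (∀ x ∈ s, 0 ≤ p.eval x) ∨ ∀ x ∈ s, p.eval x ≤ 0 := by
  by_contra! h
  obtain ⟨⟨a, has, ha⟩, ⟨b, hbs, hb⟩⟩ := h
  set u := {x | ∀ᶠ y in 𝓝 x, 0 ≤ p.eval y}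
  set v := {x | ∀ᶠ y in 𝓝 x, p.eval y ≤ 0}
  have hcover : s ⊆ u ∪ v := fun x hx =>
    eventually_nonneg_or_eventually_nonpos_of_even_rootMultiplicity (heven x hx)
  have hbu : b ∈ u := (hcover hbs).resolve_right fun hbv => hb.not_ge hbv.self_of_nhds
  have hav : a ∈ v := (hcover has).resolve_left fun hau => ha.not_ge hau.self_of_nhds
  obtain ⟨x, -, hxu, hxv⟩ := hs u v isOpen_setOfPred_eventually_nhds
    isOpen_setOfPred_eventually_nhds hcover ⟨b, hbs, hbu⟩ ⟨a, has, hav⟩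
  have hroots : ∀ᶠ y in 𝓝 x, p.IsRoot y :=
    (hxu.and hxv).mono fun y hy => le_antisymm hy.2 hy.1
  have hp : p = 0 := p.eq_zero_of_infinite_isRoot (infinite_of_mem_nhds x hroots)
  simp [hp] at hb

end Polynomial

theorem HasDerivWithinAt.nonneg_of_forall_Ioo_le {f : ℝ → ℝ} {f' a b : ℝ}
    (hf : HasDerivWithinAt f f' (Ioi a) a) (hab : a < b) (hmin : ∀ x ∈ Ioo a b, f a ≤ f x) :
    0 ≤ f' := by
  refine ge_of_tendsto ((hasDerivWithinAt_iff_tendsto_slope' self_notMem_Ioi).1 hf) ?_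
  filter_upwards [Ioo_mem_nhdsGT hab] with x hx
  rw [slope_def_field]
  exact div_nonneg (sub_nonneg.2 (hmin x hx)) (sub_nonneg.2 hx.1.le)

theorem HasDerivWithinAt.nonpos_of_forall_Ioo_le {f : ℝ → ℝ} {f' a b : ℝ}
    (hf : HasDerivWithinAt f f' (Iio b) b) (hab : a < b) (hmin : ∀ x ∈ Ioo a b, f b ≤ f x) :
    f' ≤ 0 := by
  refine le_of_tendsto ((hasDerivWithinAt_iff_tendsto_slope' self_notMem_Iio).1 hf) ?_
  filter_upwards [Ioo_mem_nhdsLT hab] with x hx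
  rw [slope_def_field]
  exact div_nonpos_of_nonneg_of_nonpos (sub_nonneg.2 (hmin x hx)) (sub_nonpos.2 hx.2.le)

/-- If `z₁ < z₂` are two distinct real roots of a univariate real polynomial `p`,
and every real root of `p` in the open interval `(z₁, z₂)` has even multiplicity,
then `p'(z₁) * p'(z₂) ≤ 0`. -/
theorem stmt0 (p : Polynomial ℝ) (z1 z2 : ℝ) (h12 : z1 < z2)
    (h1 : p.eval z1 = 0) (h2 : p.eval z2 = 0)
    (heven : ∀ z ∈ Set.Ioo z1 z2, p.eval z = 0 → Even (p.rootMultiplicity z)) :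
    p.derivative.eval z1 * p.derivative.eval z2 ≤ 0 := by
  have hmult : ∀ z ∈ Ioo z1 z2, Even (p.rootMultiplicity z) := fun z hz => by
    by_cases hroot : p.IsRoot z
    · exact heven z hz hroot
    · simp [rootMultiplicity_eq_zero hroot]
  have hd (x : ℝ) {s : Set ℝ} : HasDerivWithinAt p.eval (p.derivative.eval x) s x :=
    (p.hasDerivAt x).hasDerivWithinAt
  rcases nonneg_or_nonpos_on_of_even_rootMultiplicity isPreconnected_Ioo hmult with hpos | hneg
  · refine mul_nonpos_of_nonneg_of_nonpos ?_ ?_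
    · exact (hd z1).nonneg_of_forall_Ioo_le h12 fun x hx => h1 ▸ hpos x hx
    · exact (hd z2).nonpos_of_forall_Ioo_le h12 fun x hx => h2 ▸ hpos x hx
  · refine mul_nonpos_of_nonpos_of_nonneg ?_ ?_
    · have := (hd z1).neg.nonneg_of_forall_Ioo_le h12 fun x hx => by simpa [h1] using hneg x hx
      linarith
    · have := (hd z2).neg.nonpos_of_forall_Ioo_le h12 fun x hx => by simpa [h2] using hneg x hx
      linarith
end

section
/- Let p be a univariate real polynomial and let a ∈ ℝ, M ∈ ℝ ∪ {+∞}. Suppose the equation p(z) = 0 has exactly N > 0 real solutions z^(1) < ... < z^(N) in the open interval (a, M), where z^(1) is a simple root and every multiple root among them has odd multiplicity. If p(a) ≠ 0, then sign(p(a)) = -sign(p'(z^(1))). -/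
/-!
Factor `p = (X - z₀) q` at the first root `z₀`. Then `p'(z₀) = q(z₀)`, and `q` has no zero
on `[a, z₀]`: on `[a, z₀)` a zero of `q` would be a root of `p` below `z₀`, and `q(z₀) ≠ 0`
because `z₀` is simple. Hence `q(a)` and `q(z₀)` share a sign, and `p(a) = (a - z₀) q(a)`
has the opposite one.
-/

open Polynomial Set

theorem Real.sign_mul_of_pos {c : ℝ} (hc : 0 < c) (r : ℝ) : Real.sign (c * r) = Real.sign r := by
  rcases lt_trichotomy r 0 with hr | rfl | hr
  · rw [Real.sign_of_neg (mul_neg_of_pos_of_neg hc hr), Real.sign_of_neg hr]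
  · simp
  · rw [Real.sign_of_pos (mul_pos hc hr), Real.sign_of_pos hr]

theorem IsPreconnected.real_sign_eq {α : Type*} [TopologicalSpace α] {s : Set α}
    (hs : IsPreconnected s) {f : α → ℝ} (hf : ContinuousOn f s) (hf0 : ∀ x ∈ s, f x ≠ 0)
    {x y : α} (hx : x ∈ s) (hy : y ∈ s) : Real.sign (f x) = Real.sign (f y) := by
  have no_sign_change : ∀ u ∈ s, ∀ v ∈ s, f u < 0 → ¬ 0 < f v := by
    intro u hu v hv hu0 hv0
    obtain ⟨c, hc, hc0⟩ := hs.intermediate_value hu hv hf ⟨hu0.le, hv0.le⟩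
    exact hf0 c hc hc0
  rcases (hf0 x hx).lt_or_gt with hfx | hfx <;> rcases (hf0 y hy).lt_or_gt with hfy | hfy
  · rw [Real.sign_of_neg hfx, Real.sign_of_neg hfy]
  · exact absurd hfy (no_sign_change x hx y hy hfx)
  · exact absurd hfx (no_sign_change y hy x hx hfy)
  · rw [Real.sign_of_pos hfx, Real.sign_of_pos hfy]

theorem Polynomial.sign_eval_eq_neg_sign_derivative_eval_of_forall_Ico {p : ℝ[X]} {a z : ℝ}
    (ha : a < z) (hpz : p.eval z = 0) (hp'z : p.derivative.eval z ≠ 0)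
    (hp : ∀ x ∈ Ico a z, p.eval x ≠ 0) :
    Real.sign (p.eval a) = -Real.sign (p.derivative.eval z) := by
  obtain ⟨q, rfl⟩ : X - C z ∣ p := dvd_iff_isRoot.2 hpz
  have hqz : q.eval z = ((X - C z) * q).derivative.eval z := by simp [derivative_mul]
  have hq : ∀ x ∈ Icc a z, q.eval x ≠ 0 := by
    rintro x ⟨hax, hxz⟩
    rcases hxz.lt_or_eq with hxz | rfl
    · intro hqx
      exact hp x ⟨hax, hxz⟩ (by simp [hqx])
    · rwa [hqz]
  have hsign : Real.sign (q.eval a) = Real.sign (q.eval z) :=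
    isPreconnected_Icc.real_sign_eq q.continuousOn hq (left_mem_Icc.2 ha.le)
      (right_mem_Icc.2 ha.le)
  have hpa : ((X - C z) * q).eval a = -((z - a) * q.eval a) := by
    simp only [eval_mul, eval_sub, eval_X, eval_C]; ring
  rw [hpa, Real.sign_neg, Real.sign_mul_of_pos (sub_pos.2 ha), hsign, hqz]

theorem stmt1_general (p : Polynomial ℝ) (a : ℝ) (M : EReal)
    (N : ℕ) (hN : 0 < N) (z : Fin N → ℝ) (hmono : StrictMono z)
    (hroots : ∀ i, a < z i ∧ ((z i : EReal) < M) ∧ p.eval (z i) = 0)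
    (hexact : ∀ x : ℝ, a < x → (x : EReal) < M → p.eval x = 0 → ∃ i, x = z i)
    (hsimple : p.derivative.eval (z ⟨0, hN⟩) ≠ 0)
    (hpa : p.eval a ≠ 0) :
    Real.sign (p.eval a) = - Real.sign (p.derivative.eval (z ⟨0, hN⟩)) := by
  obtain ⟨haz, hzM, hpz⟩ := hroots ⟨0, hN⟩
  refine sign_eval_eq_neg_sign_derivative_eval_of_forall_Ico haz hpz hsimple ?_
  rintro x ⟨hax, hxz⟩ hpx
  rcases hax.eq_or_lt with rfl | hax
  · exact hpa hpx
  · obtain ⟨i, rfl⟩ := hexact x hax ((EReal.coe_lt_coe_iff.2 hxz).trans hzM) hpx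
    exact hxz.not_ge (hmono.monotone (Nat.zero_le _))

/-- If `p(z) = 0` has exactly `N > 0` real solutions `z 0 < ... < z (N-1)` in the open
interval `(a, M)` (with `M` possibly `+∞`), where `z 0` is a simple root and every
multiple root among them has odd multiplicity, and `p(a) ≠ 0`, then
`sign (p(a)) = - sign (p'(z 0))`. -/
theorem stmt1 (p : Polynomial ℝ) (a : ℝ) (M : EReal)
    (N : ℕ) (hN : 0 < N) (z : Fin N → ℝ) (hmono : StrictMono z)
    (hroots : ∀ i, a < z i ∧ ((z i : EReal) < M) ∧ p.eval (z i) = 0)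
    (hexact : ∀ x : ℝ, a < x → (x : EReal) < M → p.eval x = 0 → ∃ i, x = z i)
    (hsimple : p.derivative.eval (z ⟨0, hN⟩) ≠ 0)
    (hodd : ∀ i, p.derivative.eval (z i) = 0 → Odd (p.rootMultiplicity (z i)))
    (hpa : p.eval a ≠ 0) :
    Real.sign (p.eval a) = - Real.sign (p.derivative.eval (z ⟨0, hN⟩)) :=
  stmt1_general p a M N hN z hmono hroots hexact hsimple hpa
end

section
/- Let φ : ℝ → ℝ be a 2N-times continuously differentiable function on a neighborhood of x* (N ≥ 1) satisfying φ(x*) = κ*, φ'(x*) = 0, ..., φ^(2N-1)(x*) = 0, and φ^(2N)(x) ≠ 0 for all x in an interval (x* - ε, x* + ε) on which φ^(2N) has constant sign σ ∈ {+1, -1}. Then there exists δ > 0 such that for all δ' ∈ (0, δ): (1) the equation φ(x) = κ* + σ·δ' has exactly two solutions x^(1), x^(2) in (x* - ε, x* + ε), with x^(2) < x* < x^(1), and φ'(x^(i)) ≠ 0 at both; (2) the equation φ(x) = κ* - σ·δ' has no solutions in (x* - ε, x* + ε). -/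
/-!
Since `φ⁽ᵏ⁾(x*) = 0` for `1 ≤ k < 2N` and `σ φ⁽²ᴺ⁾ > 0`, the mean value theorem applied
`2N - 1` times, from the top derivative down, gives `(x - x*)ʲ σ φ⁽²ᴺ⁻ʲ⁾(x) > 0` for `x ≠ x*`.
For the odd exponent `j = 2N - 1` this says that `σ φ'` has the sign of `x - x*`, so
`σ (φ - κ*)` vanishes only at `x*` and is strictly decreasing to its left and strictly
increasing to its right. The intermediate value theorem on each side yields the two simple
preimages of `κ* + σ δ'`, and positivity of `σ (φ - κ*)` rules out the level `κ* - σ δ'`.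
-/

open Set

variable {s : Set ℝ} {f : ℝ → ℝ} {a : ℝ}

theorem exists_deriv_mul_sub_eq_of_ordConnected (hs : s.OrdConnected)
    (hf : DifferentiableOn ℝ f s) (ha : a ∈ s) {x : ℝ} (hx : x ∈ s) (hxa : x ≠ a) :
    ∃ c ∈ s, ∃ t > 0, x - a = t * (c - a) ∧ f x - f a = deriv f c * (x - a) := by
  rcases hxa.lt_or_gt with hlt | hgt
  · obtain ⟨c, hc, hfc⟩ := exists_deriv_eq_slope f hlt (hf.continuousOn.mono (hs.out hx ha))
      (hf.mono (Ioo_subset_Icc_self.trans (hs.out hx ha)))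
    refine ⟨c, hs.out hx ha (Ioo_subset_Icc_self hc), (a - x) / (a - c),
      div_pos (by linarith [hc.1]) (by linarith [hc.2]), ?_, ?_⟩
    · field_simp [(by linarith [hc.2] : a - c ≠ 0)]; ring
    · rw [hfc]; field_simp [(by linarith : a - x ≠ 0)]; ring
  · obtain ⟨c, hc, hfc⟩ := exists_deriv_eq_slope f hgt (hf.continuousOn.mono (hs.out ha hx))
      (hf.mono (Ioo_subset_Icc_self.trans (hs.out ha hx)))
    refine ⟨c, hs.out ha hx (Ioo_subset_Icc_self hc), (x - a) / (c - a),
      div_pos (by linarith [hc.2]) (by linarith [hc.1]), ?_, ?_⟩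
    · field_simp [(by linarith [hc.1] : c - a ≠ 0)]
    · rw [hfc]; field_simp [(by linarith : x - a ≠ 0)]

theorem pos_pow_succ_mul_of_pos_pow_mul_deriv (hs : s.OrdConnected)
    (hf : DifferentiableOn ℝ f s) (ha : a ∈ s) (hfa : f a = 0) (j : ℕ)
    (hf' : ∀ y ∈ s, y ≠ a → 0 < (y - a) ^ j * deriv f y) :
    ∀ x ∈ s, x ≠ a → 0 < (x - a) ^ (j + 1) * f x := by
  intro x hx hxa
  obtain ⟨c, hcs, t, ht, hxc, hfx⟩ := exists_deriv_mul_sub_eq_of_ordConnected hs hf ha hx hxa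
  have hca : c ≠ a := fun hca => hxa (by simpa [hca, sub_eq_zero] using hxc)
  rw [hfa, sub_zero] at hfx
  have hfactor :
      (x - a) ^ (j + 1) * f x = (x - a) ^ 2 * t ^ j * ((c - a) ^ j * deriv f c) := by
    rw [hfx, hxc, mul_pow]; ring
  rw [hfactor]
  exact mul_pos (mul_pos (sq_pos_of_ne_zero (sub_ne_zero.mpr hxa)) (pow_pos ht j))
    (hf' c hcs hca)

theorem pos_pow_mul_iteratedDerivWithin {n : ℕ} (hso : IsOpen s) (hs : s.OrdConnected)
    (hf : ContDiffOn ℝ n f s) (ha : a ∈ s)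
    (hvanish : ∀ k, 1 ≤ k → k < n → iteratedDerivWithin k f s a = 0) {σ : ℝ}
    (hpos : ∀ x ∈ s, 0 < σ * iteratedDerivWithin n f s x) :
    ∀ j < n, ∀ x ∈ s, x ≠ a → 0 < (x - a) ^ j * (σ * iteratedDerivWithin (n - j) f s x) := by
  intro j
  induction j with
  | zero => simpa using fun _ x hx _ => hpos x hx
  | succ j ih =>
    intro hj
    set k := n - (j + 1)
    have hk : n - j = k + 1 := by omega
    have hdiff : DifferentiableOn ℝ (iteratedDerivWithin k f s) s :=
      hf.differentiableOn_iteratedDerivWithin (by exact_mod_cast (by omega : k < n))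
        hso.uniqueDiffOn
    have hderiv : ∀ y ∈ s, deriv (fun x => σ * iteratedDerivWithin k f s x) y =
        σ * iteratedDerivWithin (k + 1) f s y := fun y hy => by
      rw [deriv_const_mul _ ((hdiff y hy).differentiableAt (hso.mem_nhds hy)),
        iteratedDerivWithin_succ, derivWithin_of_isOpen hso hy]
    refine pos_pow_succ_mul_of_pos_pow_mul_deriv hs (hdiff.const_mul σ) ha
      (by rw [hvanish k (by omega) (by omega), mul_zero]) j fun y hy hya => ?_
    rw [hderiv y hy, ← hk]
    exact ih (by omega) y hy hya

theorem pos_sub_mul_deriv_of_even {n : ℕ} (hn : Even n) (hn0 : n ≠ 0) (hso : IsOpen s)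
    (hs : s.OrdConnected) (hf : ContDiffOn ℝ n f s) (ha : a ∈ s)
    (hvanish : ∀ k, 1 ≤ k → k < n → iteratedDerivWithin k f s a = 0) {σ : ℝ}
    (hpos : ∀ x ∈ s, 0 < σ * iteratedDerivWithin n f s x) :
    ∀ x ∈ s, x ≠ a → 0 < (x - a) * (σ * deriv f x) := by
  intro x hx hxa
  have hn2 : 2 ≤ n := by obtain ⟨m, rfl⟩ := hn; omega
  have h := pos_pow_mul_iteratedDerivWithin hso hs hf ha hvanish hpos (n - 1) (by omega) x hx hxa
  rw [show n - (n - 1) = 1 by omega, iteratedDerivWithin_one, derivWithin_of_isOpen hso hx,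
    show n - 1 = n - 2 + 1 by omega, pow_succ, mul_assoc] at h
  exact pos_of_mul_pos_right h ((hn.tsub even_two).pow_pos (sub_ne_zero.mpr hxa)).le

section LevelSet

variable (hs : s.OrdConnected) (hf : ContinuousOn f s)
  (hf' : ∀ y ∈ s, y ≠ a → 0 < (y - a) * deriv f y)
include hs hf hf'

theorem strictMonoOn_inter_Ici_of_pos_sub_mul_deriv : StrictMonoOn f (s ∩ Ici a) := by
  refine strictMonoOn_of_deriv_pos (hs.inter ordConnected_Ici).convex (hf.mono inter_subset_left)
    fun y hy => ?_
  have hya : a < y := by simpa using interior_mono inter_subset_right hy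
  exact pos_of_mul_pos_right (hf' y (interior_subset hy).1 hya.ne') (sub_pos.mpr hya).le

theorem strictAntiOn_inter_Iic_of_pos_sub_mul_deriv : StrictAntiOn f (s ∩ Iic a) := by
  refine strictAntiOn_of_deriv_neg (hs.inter ordConnected_Iic).convex (hf.mono inter_subset_left)
    fun y hy => ?_
  have hya : y < a := by simpa using interior_mono inter_subset_right hy
  exact neg_of_mul_pos_right (hf' y (interior_subset hy).1 hya.ne) (sub_neg.mpr hya).le

variable (ha : a ∈ s) (hfa : f a = 0)
include ha hfa

theorem pos_of_pos_sub_mul_deriv {x : ℝ} (hx : x ∈ s) (hxa : x ≠ a) : 0 < f x := by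
  rw [← hfa]
  rcases hxa.lt_or_gt with hlt | hgt
  · exact strictAntiOn_inter_Iic_of_pos_sub_mul_deriv hs hf hf'
      ⟨hx, hlt.le⟩ ⟨ha, self_mem_Iic⟩ hlt
  · exact strictMonoOn_inter_Ici_of_pos_sub_mul_deriv hs hf hf'
      ⟨ha, self_mem_Ici⟩ ⟨hx, hgt.le⟩ hgt

theorem exists_two_preimages_of_pos_sub_mul_deriv {b c y : ℝ} (hb : b ∈ s) (hc : c ∈ s)
    (hba : b < a) (hac : a < c) (hy : 0 < y) (hyb : y < f b) (hyc : y < f c) :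
    ∃ x₁ x₂, x₁ ∈ s ∧ x₂ ∈ s ∧ x₂ < a ∧ a < x₁ ∧ f x₁ = y ∧ f x₂ = y ∧
      ∀ x ∈ s, f x = y → x = x₁ ∨ x = x₂ := by
  obtain ⟨x₁, ⟨hax₁, hx₁c⟩, hfx₁⟩ :=
    intermediate_value_Ioo hac.le (hf.mono (hs.out ha hc)) (by rw [hfa]; exact ⟨hy, hyc⟩)
  obtain ⟨x₂, ⟨hbx₂, hx₂a⟩, hfx₂⟩ :=
    intermediate_value_Ioo' hba.le (hf.mono (hs.out hb ha)) (by rw [hfa]; exact ⟨hy, hyb⟩)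
  have hx₁ : x₁ ∈ s := hs.out ha hc ⟨hax₁.le, hx₁c.le⟩
  have hx₂ : x₂ ∈ s := hs.out hb ha ⟨hbx₂.le, hx₂a.le⟩
  refine ⟨x₁, x₂, hx₁, hx₂, hx₂a, hax₁, hfx₁, hfx₂, fun x hx hfx => ?_⟩
  rcases le_total x a with hxa | hax
  · exact .inr <| strictAntiOn_inter_Iic_of_pos_sub_mul_deriv hs hf hf' |>.injOn
      ⟨hx, hxa⟩ ⟨hx₂, hx₂a.le⟩ (hfx.trans hfx₂.symm)
  · exact .inl <| strictMonoOn_inter_Ici_of_pos_sub_mul_deriv hs hf hf' |>.injOn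
      ⟨hx, hax⟩ ⟨hx₁, hax₁.le⟩ (hfx.trans hfx₁.symm)

theorem exists_level_sets_of_pos_sub_mul_deriv {b c : ℝ} (hb : b ∈ s) (hc : c ∈ s)
    (hba : b < a) (hac : a < c) :
    ∃ δ > 0, ∀ y ∈ Ioo 0 δ,
      (∃ x₁ x₂, x₁ ∈ s ∧ x₂ ∈ s ∧ x₂ < a ∧ a < x₁ ∧ f x₁ = y ∧ f x₂ = y ∧
        ∀ x ∈ s, f x = y → x = x₁ ∨ x = x₂) ∧
      ∀ x ∈ s, f x ≠ -y := by
  refine ⟨min (f b) (f c), lt_min (pos_of_pos_sub_mul_deriv hs hf hf' ha hfa hb hba.ne)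
    (pos_of_pos_sub_mul_deriv hs hf hf' ha hfa hc hac.ne'), fun y ⟨hy0, hy⟩ => ⟨?_, ?_⟩⟩
  · exact exists_two_preimages_of_pos_sub_mul_deriv hs hf hf' ha hfa hb hc hba hac hy0
      (hy.trans_le (min_le_left _ _)) (hy.trans_le (min_le_right _ _))
  · intro x hx hfx
    rcases eq_or_ne x a with rfl | hxa
    · linarith
    · linarith [pos_of_pos_sub_mul_deriv hs hf hf' ha hfa hx hxa]

end LevelSet

theorem pos_mul_of_sign_eq {y σ : ℝ} (hy : Real.sign y = σ) (hσ : σ ≠ 0) : 0 < σ * y := by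
  rw [← hy]
  exact Real.sign_mul_pos_of_ne_zero y fun h0 => hσ (by rw [← hy, h0, Real.sign_zero])

/-- Even-multiplicity perturbation lemma: if `φ` is `2N`-times continuously
differentiable on `(x* - ε, x* + ε)` with `φ(x*) = κ*`, vanishing derivatives up to
order `2N - 1` at `x*`, and `2N`-th derivative of constant sign `σ` on the interval,
then for small one-sided perturbations `δ'` of the level: the level `κ* + σδ'` has
exactly two simple preimages straddling `x*`, and the level `κ* - σδ'` has none. -/
theorem stmt4 (N : ℕ) (hN : 1 ≤ N) (φ : ℝ → ℝ) (xs κs ε : ℝ) (hε : 0 < ε)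
    (hsmooth : ContDiffOn ℝ (2 * N) φ (Set.Ioo (xs - ε) (xs + ε)))
    (hmem : xs ∈ Set.Ioo (xs - ε) (xs + ε))
    (hval : φ xs = κs)
    (hderiv : ∀ k : ℕ, 1 ≤ k → k ≤ 2 * N - 1 →
      iteratedDerivWithin k φ (Set.Ioo (xs - ε) (xs + ε)) xs = 0)
    (σ : ℝ) (hσ : σ = 1 ∨ σ = -1)
    (hsign : ∀ x ∈ Set.Ioo (xs - ε) (xs + ε),
      Real.sign (iteratedDerivWithin (2 * N) φ (Set.Ioo (xs - ε) (xs + ε)) x) = σ) :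
    ∃ δ > 0, ∀ δ' ∈ Set.Ioo (0 : ℝ) δ,
      (∃ x1 x2 : ℝ, x1 ∈ Set.Ioo (xs - ε) (xs + ε) ∧ x2 ∈ Set.Ioo (xs - ε) (xs + ε) ∧
        x2 < xs ∧ xs < x1 ∧
        φ x1 = κs + σ * δ' ∧ φ x2 = κs + σ * δ' ∧
        deriv φ x1 ≠ 0 ∧ deriv φ x2 ≠ 0 ∧
        (∀ x ∈ Set.Ioo (xs - ε) (xs + ε), φ x = κs + σ * δ' → x = x1 ∨ x = x2)) ∧
      (∀ x ∈ Set.Ioo (xs - ε) (xs + ε), φ x ≠ κs - σ * δ') := by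
  set I := Ioo (xs - ε) (xs + ε)
  have hσ0 : σ ≠ 0 := by rcases hσ with rfl | rfl <;> norm_num
  have hpos : ∀ x ∈ I, 0 < σ * iteratedDerivWithin (2 * N) φ I x := fun x hx =>
    pos_mul_of_sign_eq (hsign x hx) hσ0
  have hφ' : ∀ x ∈ I, x ≠ xs → 0 < (x - xs) * (σ * deriv φ x) :=
    pos_sub_mul_deriv_of_even (even_two_mul N) (by omega) isOpen_Ioo ordConnected_Ioo
      (by exact_mod_cast hsmooth) hmem (fun k hk1 hkn => hderiv k hk1 (by omega)) hpos
  have hφ : DifferentiableOn ℝ φ I := hsmooth.differentiableOn (by norm_cast; omega)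
  set g := fun x => σ * (φ x - κs)
  have hg' : ∀ x ∈ I, x ≠ xs → 0 < (x - xs) * deriv g x := fun x hx hxs => by
    have hφx := (hφ x hx).differentiableAt (isOpen_Ioo.mem_nhds hx)
    rw [deriv_const_mul _ (hφx.sub_const κs), deriv_sub_const]
    exact hφ' x hx hxs
  have hg : ContinuousOn g I := (hφ.continuousOn.sub continuousOn_const).const_smul σ
  have hgxs : g xs = 0 := by simp [g, hval]
  have hlevel : ∀ x y, g x = y ↔ φ x = κs + σ * y := fun x y => by
    rcases hσ with rfl | rfl <;> simp only [g] <;> constructor <;> intro h <;> linarith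
  obtain ⟨δ, hδ, hlev⟩ := exists_level_sets_of_pos_sub_mul_deriv ordConnected_Ioo hg hg' hmem
    hgxs (b := xs - ε / 2) (c := xs + ε / 2) ⟨by linarith, by linarith⟩ ⟨by linarith, by linarith⟩
    (by linarith) (by linarith)
  refine ⟨δ, hδ, fun δ' hδ' => ?_⟩
  obtain ⟨⟨x1, x2, hx1, hx2, hx2xs, hxsx1, hgx1, hgx2, huniq⟩, hnone⟩ := hlev δ' hδ'
  refine ⟨⟨x1, x2, hx1, hx2, hx2xs, hxsx1, (hlevel _ _).1 hgx1, (hlevel _ _).1 hgx2,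
    fun h0 => ?_, fun h0 => ?_, fun x hx hφx => huniq x hx ((hlevel _ _).2 hφx)⟩,
    fun x hx hφx => hnone x hx ((hlevel _ _).2 (by rw [hφx]; ring))⟩
  · simpa [h0] using hφ' x1 hx1 hxsx1.ne'
  · simpa [h0] using hφ' x2 hx2 hx2xs.ne
end

section
/- Let φ : ℝ → ℝ be a (2N+1)-times continuously differentiable function on a neighborhood of x* (N ≥ 0) with φ(x*) = κ*, φ'(x*) = 0, ..., φ^(2N)(x*) = 0, and φ^(2N+1)(x) ≠ 0 on an interval (x* - ε, x* + ε) where it has constant sign σ. Then there exists δ > 0 such that for all δ' ∈ (0, δ): the equation φ(x) = κ* + σ·δ' has a solution x^(1) with 0 < x^(1) - x* < ε and φ'(x^(1)) ≠ 0, and the equation φ(x) = κ* - σ·δ' has a solution x^(2) with -ε < x^(2) - x* < 0 and φ'(x^(2)) ≠ 0. -/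
/-!
Normalise to `ψ = σ (φ - κ*)`: its derivatives of order `< 2N + 1` vanish at `x*` and its
`(2N+1)`-st derivative is positive off `x*`. Descending from the top order, the mean value
theorem turns `(x - x*)^j ψ⁽ᵏ⁺¹⁾(x) > 0` into `(x - x*)^(j+1) ψ⁽ᵏ⁾(x) > 0` (for `x ≠ x*`), so
`(x - x*)^(2N+1-k) ψ⁽ᵏ⁾(x) > 0` for every `k`. At `k = 0` this says `ψ` has the sign of
`x - x*`, at `k = 1` that `φ'` does not vanish off `x*`, and the intermediate value theorem then
reaches every small level `δ'` to the right of `x*` and `-δ'` to the left.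
-/

open Set

theorem Set.OrdConnected.exists_mem_Ioo_sub_eq_deriv_mul {f : ℝ → ℝ} {s : Set ℝ}
    (hs : s.OrdConnected) (hf : ∀ x ∈ s, DifferentiableAt ℝ f x) {a b : ℝ}
    (ha : a ∈ s) (hb : b ∈ s) (hab : a < b) :
    ∃ ξ ∈ Ioo a b, f b - f a = deriv f ξ * (b - a) := by
  have hsub : Icc a b ⊆ s := hs.out ha hb
  obtain ⟨ξ, hξ, hslope⟩ := exists_deriv_eq_slope f hab
    (fun y hy => (hf y (hsub hy)).continuousAt.continuousWithinAt)
    (fun y hy => (hf y (hsub (Ioo_subset_Icc_self hy))).differentiableWithinAt)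
  refine ⟨ξ, hξ, ?_⟩
  rw [hslope, div_mul_cancel₀ _ (sub_ne_zero.2 hab.ne')]

theorem pow_succ_mul_pos_of_pow_mul_deriv_pos {f : ℝ → ℝ} {s : Set ℝ} {c : ℝ} {m : ℕ}
    (hs : s.OrdConnected) (hf : ∀ x ∈ s, DifferentiableAt ℝ f x) (hc : c ∈ s) (hfc : f c = 0)
    (hf' : ∀ x ∈ s, x ≠ c → 0 < (x - c) ^ m * deriv f x) {x : ℝ} (hx : x ∈ s) (hxc : x ≠ c) :
    0 < (x - c) ^ (m + 1) * f x := by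
  obtain ⟨ξ, hξ, hξc, hsame, hmvt⟩ :
      ∃ ξ ∈ s, ξ ≠ c ∧ 0 < (x - c) * (ξ - c) ∧ f x = deriv f ξ * (x - c) := by
    rcases hxc.lt_or_gt with hlt | hlt
    · obtain ⟨ξ, hξ, h⟩ := hs.exists_mem_Ioo_sub_eq_deriv_mul hf hx hc hlt
      refine ⟨ξ, hs.out hx hc (Ioo_subset_Icc_self hξ), hξ.2.ne, ?_, by linarith⟩
      exact mul_pos_of_neg_of_neg (by linarith) (by linarith [hξ.2])
    · obtain ⟨ξ, hξ, h⟩ := hs.exists_mem_Ioo_sub_eq_deriv_mul hf hc hx hlt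
      refine ⟨ξ, hs.out hc hx (Ioo_subset_Icc_self hξ), hξ.1.ne', ?_, by linarith⟩
      exact mul_pos (by linarith) (by linarith [hξ.1])
  have hpos : 0 < ((x - c) * (ξ - c)) ^ m * (x - c) ^ 2 * ((ξ - c) ^ m * deriv f ξ) :=
    mul_pos (mul_pos (pow_pos hsame m) (sq_pos_of_ne_zero (sub_ne_zero.2 hxc))) (hf' ξ hξ hξc)
  have : ((x - c) * (ξ - c)) ^ m * (x - c) ^ 2 * ((ξ - c) ^ m * deriv f ξ) =
      ((ξ - c) ^ m) ^ 2 * ((x - c) ^ (m + 1) * f x) := by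
    rw [hmvt, mul_pow]; ring
  exact pos_of_mul_pos_right (this ▸ hpos) (sq_nonneg _)

theorem pow_sub_mul_iteratedDerivWithin_pos {f : ℝ → ℝ} {s : Set ℝ} {c : ℝ} {n : ℕ}
    (hs : IsOpen s) (hs' : s.OrdConnected) (hf : ContDiffOn ℝ n f s) (hc : c ∈ s)
    (hzero : ∀ k < n, iteratedDerivWithin k f s c = 0)
    (hpos : ∀ x ∈ s, x ≠ c → 0 < iteratedDerivWithin n f s x) {k : ℕ} (hk : k ≤ n)
    {x : ℝ} (hx : x ∈ s) (hxc : x ≠ c) :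
    0 < (x - c) ^ (n - k) * iteratedDerivWithin k f s x := by
  suffices ∀ j k, k + j = n → ∀ x ∈ s, x ≠ c →
      0 < (x - c) ^ j * iteratedDerivWithin k f s x from this _ k (by omega) x hx hxc
  intro j
  induction j with
  | zero =>
    rintro k rfl x hx hxc
    simpa using hpos x hx hxc
  | succ j ih =>
    intro k hkn x hx hxc
    have hdiff : DifferentiableOn ℝ (iteratedDerivWithin k f s) s :=
      hf.differentiableOn_iteratedDerivWithin (by exact_mod_cast (show k < n by omega))
        hs.uniqueDiffOn
    refine pow_succ_mul_pos_of_pow_mul_deriv_pos hs'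
      (fun y hy => hdiff.differentiableAt (hs.mem_nhds hy)) hc (hzero k (by omega)) ?_ hx hxc
    intro y hy hyc
    rw [← derivWithin_of_isOpen hs hy, ← iteratedDerivWithin_succ]
    exact ih (k + 1) (by omega) y hy hyc

theorem iteratedDerivWithin_sub_const {f : ℝ → ℝ} {s : Set ℝ} {x : ℝ} {n : ℕ} (hn : 0 < n)
    (a : ℝ) : iteratedDerivWithin n (fun z => f z - a) s x = iteratedDerivWithin n f s x := by
  simpa only [neg_add_eq_sub] using iteratedDerivWithin_const_add hn (-a) (f := f) (s := s) (x := x)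

theorem mul_pos_of_sign_eq {y σ : ℝ} (hσ : σ ≠ 0) (h : Real.sign y = σ) : 0 < σ * y :=
  h ▸ Real.sign_mul_pos_of_ne_zero y fun hy => hσ (h ▸ hy ▸ Real.sign_zero)

theorem exists_eq_of_sub_mul_pos {ψ : ℝ → ℝ} {a b c : ℝ} (hc : c ∈ Ioo a b)
    (hψ : ContinuousOn ψ (Ioo a b)) (hψc : ψ c = 0)
    (hsign : ∀ x ∈ Ioo a b, x ≠ c → 0 < (x - c) * ψ x) :
    ∃ δ > 0, ∀ δ' ∈ Ioo 0 δ, (∃ x ∈ Ioo c b, ψ x = δ') ∧ (∃ x ∈ Ioo a c, ψ x = -δ') := by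
  obtain ⟨hac, hcb⟩ := hc
  obtain ⟨r, hcr, hrb⟩ := exists_between hcb
  obtain ⟨l, hal, hlc⟩ := exists_between hac
  have hψr : 0 < ψ r :=
    pos_of_mul_pos_right (hsign r ⟨hac.trans hcr, hrb⟩ hcr.ne') (sub_nonneg.2 hcr.le)
  have hψl : ψ l < 0 :=
    neg_of_mul_pos_right (hsign l ⟨hal, hlc.trans hcb⟩ hlc.ne) (sub_nonpos.2 hlc.le)
  refine ⟨min (ψ r) (-ψ l), lt_min hψr (neg_pos.2 hψl), fun δ' ⟨hδ'0, hδ'⟩ => ⟨?_, ?_⟩⟩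
  · obtain ⟨x, hx, hψx⟩ := intermediate_value_Ioc hcr.le (hψ.mono (Icc_subset_Ioo hac hrb))
      (show δ' ∈ Ioc (ψ c) (ψ r) from ⟨hψc ▸ hδ'0, hδ'.le.trans (min_le_left _ _)⟩)
    exact ⟨x, ⟨hx.1, hx.2.trans_lt hrb⟩, hψx⟩
  · obtain ⟨x, hx, hψx⟩ := intermediate_value_Ico hlc.le (hψ.mono (Icc_subset_Ioo hal hcb))
      (show -δ' ∈ Ico (ψ l) (ψ c) from
        ⟨by linarith [min_le_right (ψ r) (-ψ l)], by linarith⟩)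
    exact ⟨x, ⟨hal.trans_le hx.1, hx.2⟩, hψx⟩

theorem mul_pow_succ_mul_sub_pos_and_mul_pow_mul_deriv_pos {f : ℝ → ℝ} {s : Set ℝ}
    {c σ : ℝ} {n : ℕ} (hs : IsOpen s) (hs' : s.OrdConnected) (hf : ContDiffOn ℝ (n + 1) f s)
    (hc : c ∈ s) (hzero : ∀ k, 1 ≤ k → k ≤ n → iteratedDerivWithin k f s c = 0)
    (hpos : ∀ x ∈ s, 0 < σ * iteratedDerivWithin (n + 1) f s x) {x : ℝ} (hx : x ∈ s)
    (hxc : x ≠ c) :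
    0 < σ * (x - c) ^ (n + 1) * (f x - f c) ∧ 0 < σ * (x - c) ^ n * deriv f x := by
  set ψ : ℝ → ℝ := fun x => σ * (f x - f c)
  have hψ : ContDiffOn ℝ (n + 1) ψ s := contDiffOn_const.mul (hf.sub contDiffOn_const)
  have hψ_iter : ∀ k, 0 < k → ∀ x, iteratedDerivWithin k ψ s x = σ * iteratedDerivWithin k f s x :=
    fun k hk x => by
      rw [iteratedDerivWithin_const_mul_field, iteratedDerivWithin_sub_const hk]
  have hψ_zero : ∀ k < n + 1, iteratedDerivWithin k ψ s c = 0 := by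
    rintro (_ | k) hk
    · simp [ψ]
    · rw [hψ_iter _ k.succ_pos, hzero _ (by omega) (by omega), mul_zero]
  have horder {k} (hk : k ≤ n + 1) :=
    pow_sub_mul_iteratedDerivWithin_pos hs hs' (by exact_mod_cast hψ) hc hψ_zero
      (fun y hy _ => hψ_iter _ n.succ_pos y ▸ hpos y hy) hk hx hxc
  constructor
  · have := horder (Nat.zero_le _)
    rwa [Nat.sub_zero, iteratedDerivWithin_zero, mul_left_comm, ← mul_assoc] at this
  · have := horder (by omega : 1 ≤ n + 1)
    rwa [hψ_iter 1 one_pos, iteratedDerivWithin_one, derivWithin_of_isOpen hs hx,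
      Nat.add_sub_cancel, mul_left_comm, ← mul_assoc] at this

theorem stmt5_general (N : ℕ) (φ : ℝ → ℝ) (xs κs ε : ℝ)
    (hsmooth : ContDiffOn ℝ (2 * N + 1) φ (Set.Ioo (xs - ε) (xs + ε)))
    (hmem : xs ∈ Set.Ioo (xs - ε) (xs + ε))
    (hval : φ xs = κs)
    (hderiv : ∀ k : ℕ, 1 ≤ k → k ≤ 2 * N →
      iteratedDerivWithin k φ (Set.Ioo (xs - ε) (xs + ε)) xs = 0)
    (σ : ℝ) (hσ : σ = 1 ∨ σ = -1)
    (hsign : ∀ x ∈ Set.Ioo (xs - ε) (xs + ε),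
      Real.sign (iteratedDerivWithin (2 * N + 1) φ (Set.Ioo (xs - ε) (xs + ε)) x) = σ) :
    ∃ δ > 0, ∀ δ' ∈ Set.Ioo (0 : ℝ) δ,
      (∃ x1 : ℝ, 0 < x1 - xs ∧ x1 - xs < ε ∧ φ x1 = κs + σ * δ' ∧ deriv φ x1 ≠ 0) ∧
      (∃ x2 : ℝ, -ε < x2 - xs ∧ x2 - xs < 0 ∧ φ x2 = κs - σ * δ' ∧ deriv φ x2 ≠ 0) := by
  set I := Ioo (xs - ε) (xs + ε)
  have hσσ : σ * σ = 1 := by rcases hσ with rfl | rfl <;> norm_num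
  have horder x (hx : x ∈ I) (hxs : x ≠ xs) :=
    mul_pow_succ_mul_sub_pos_and_mul_pow_mul_deriv_pos isOpen_Ioo ordConnected_Ioo hsmooth hmem
      hderiv (fun y hy => mul_pos_of_sign_eq (by rcases hσ with rfl | rfl <;> norm_num)
        (hsign y hy)) hx hxs
  have hψ_sign x (hx : x ∈ I) (hxs : x ≠ xs) : 0 < (x - xs) * (σ * (φ x - κs)) := by
    have := (horder x hx hxs).1
    rw [pow_succ, pow_mul', hval] at this
    exact pos_of_mul_pos_right (by linarith) (sq_nonneg ((x - xs) ^ N))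
  have hφ' x (hx : x ∈ I) (hxs : x ≠ xs) : deriv φ x ≠ 0 := by
    intro h
    simpa [h] using (horder x hx hxs).2
  obtain ⟨δ, hδ, hlevel⟩ := exists_eq_of_sub_mul_pos (ψ := fun x => σ * (φ x - κs)) hmem
    (continuousOn_const.mul (hsmooth.continuousOn.sub continuousOn_const)) (by simp [hval])
    hψ_sign
  refine ⟨δ, hδ, fun δ' hδ' => ?_⟩
  obtain ⟨⟨x1, hx1, hψx1⟩, ⟨x2, hx2, hψx2⟩⟩ := hlevel δ' hδ'
  have hx1I : x1 ∈ I := ⟨by linarith [hmem.1, hx1.1], hx1.2⟩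
  have hx2I : x2 ∈ I := ⟨hx2.1, by linarith [hmem.2, hx2.2]⟩
  refine ⟨⟨x1, by linarith [hx1.1], by linarith [hx1.2], ?_, hφ' x1 hx1I hx1.1.ne'⟩,
    ⟨x2, by linarith [hx2.1], by linarith [hx2.2], ?_, hφ' x2 hx2I hx2.2.ne⟩⟩
  · linear_combination σ * hψx1 - (φ x1 - κs) * hσσ
  · linear_combination σ * hψx2 - (φ x2 - κs) * hσσ

/-- Odd-multiplicity perturbation lemma: if `φ` is `(2N+1)`-times continuously
differentiable on `(x* - ε, x* + ε)` with `φ(x*) = κ*`, vanishing derivatives up to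
order `2N` at `x*`, and `(2N+1)`-st derivative of constant sign `σ` on the interval,
then for all small `δ' > 0` the level `κ* + σδ'` has a simple preimage just to the
right of `x*` and the level `κ* - σδ'` has one just to the left. -/
theorem stmt5 (N : ℕ) (φ : ℝ → ℝ) (xs κs ε : ℝ) (hε : 0 < ε)
    (hsmooth : ContDiffOn ℝ (2 * N + 1) φ (Set.Ioo (xs - ε) (xs + ε)))
    (hmem : xs ∈ Set.Ioo (xs - ε) (xs + ε))
    (hval : φ xs = κs)
    (hderiv : ∀ k : ℕ, 1 ≤ k → k ≤ 2 * N →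
      iteratedDerivWithin k φ (Set.Ioo (xs - ε) (xs + ε)) xs = 0)
    (σ : ℝ) (hσ : σ = 1 ∨ σ = -1)
    (hsign : ∀ x ∈ Set.Ioo (xs - ε) (xs + ε),
      Real.sign (iteratedDerivWithin (2 * N + 1) φ (Set.Ioo (xs - ε) (xs + ε)) x) = σ) :
    ∃ δ > 0, ∀ δ' ∈ Set.Ioo (0 : ℝ) δ,
      (∃ x1 : ℝ, 0 < x1 - xs ∧ x1 - xs < ε ∧ φ x1 = κs + σ * δ' ∧ deriv φ x1 ≠ 0) ∧
      (∃ x2 : ℝ, -ε < x2 - xs ∧ x2 - xs < 0 ∧ φ x2 = κs - σ * δ' ∧ deriv φ x2 ≠ 0) :=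
  stmt5_general N φ xs κs ε hsmooth hmem hval hderiv σ hσ hsign
end

section
/- Let q be a real polynomial with exactly N roots in an open interval, and call a simple root x^(i) 'stable' if q'(x^(i)) < 0. Then at most ⌈N/2⌉ of the roots in the interval are stable. -/
/-!
Near a root `c` with `q'(c) < 0` the polynomial is positive to the left of `c` and negative to
the right. So between two consecutive stable roots `q` passes from negative to positive values
and, by the intermediate value theorem, has another root there, which is impossible for
consecutive roots. Hence no two stable roots are adjacent in the ordered list `z 0 < z 1 < ⋯`,
and a set of pairwise non-adjacent indices in `Fin N` has at most `⌈N/2⌉ = (N + 1) / 2`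
elements, as `i ↦ i / 2` is injective on it.
-/

open Filter Set Topology SignType

theorem exists_root_between_of_deriv_neg {f : ℝ → ℝ} {c₁ c₂ : ℝ} (hlt : c₁ < c₂)
    (hf : ContinuousOn f (Icc c₁ c₂)) (h₁ : f c₁ = 0) (h₂ : f c₂ = 0)
    (h₁' : deriv f c₁ < 0) (h₂' : deriv f c₂ < 0) :
    ∃ x ∈ Ioo c₁ c₂, f x = 0 := by
  have near₁ : ∀ᶠ x in 𝓝[>] c₁, sign (f x) = sign (c₁ - x) ∧ x ∈ Ioo c₁ c₂ :=
    ((eventually_nhdsWithin_sign_eq_of_deriv_neg h₁' h₁).filter_mono nhdsWithin_le_nhds).and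
      (Ioo_mem_nhdsGT hlt)
  obtain ⟨x₁, hsign₁, hx₁⟩ := near₁.exists
  have near₂ : ∀ᶠ x in 𝓝[<] c₂, sign (f x) = sign (c₂ - x) ∧ x ∈ Ioo x₁ c₂ :=
    ((eventually_nhdsWithin_sign_eq_of_deriv_neg h₂' h₂).filter_mono nhdsWithin_le_nhds).and
      (Ioo_mem_nhdsLT hx₁.2)
  obtain ⟨x₂, hsign₂, hx₂⟩ := near₂.exists
  have hneg : f x₁ < 0 := by
    rwa [sign_eq_neg_one_iff.mpr (sub_neg.mpr hx₁.1), sign_eq_neg_one_iff] at hsign₁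
  have hpos : 0 < f x₂ := by
    rwa [sign_eq_one_iff.mpr (sub_pos.mpr hx₂.2), sign_eq_one_iff] at hsign₂
  obtain ⟨x, hx, hx0⟩ := intermediate_value_Ioo hx₂.1.le
    (hf.mono (Icc_subset_Icc hx₁.1.le hx₂.2.le)) ⟨hneg, hpos⟩
  exact ⟨x, ⟨hx₁.1.trans hx.1, hx.2.trans hx₂.2⟩, hx0⟩

theorem ncard_le_of_forall_ne_succ {N : ℕ} {S : Set (Fin N)}
    (hS : ∀ i ∈ S, ∀ j ∈ S, (j : ℕ) ≠ i + 1) : S.ncard ≤ (N + 1) / 2 := by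
  have hmaps : MapsTo (fun i : Fin N ↦ (i : ℕ) / 2) S (Finset.range ((N + 1) / 2)) := by
    intro i _
    simp only [Finset.coe_range, mem_Iio]
    omega
  have hinj : InjOn (fun i : Fin N ↦ (i : ℕ) / 2) S := by
    intro i hi j hj hij
    have := hS i hi j hj
    have := hS j hj i hi
    simp only at hij
    omega
  simpa using ncard_le_ncard_of_injOn _ hmaps hinj (Finset.range _).finite_toSet

/-- If a real polynomial `q` has exactly `N` roots in an open interval, then at most
`⌈N/2⌉` of them are "stable", i.e., satisfy `q' < 0` there. -/
theorem stmt13 (q : Polynomial ℝ) (N : ℕ) (a : ℝ) (M : EReal)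
    (z : Fin N → ℝ) (hmono : StrictMono z)
    (hroots : ∀ i, a < z i ∧ ((z i : EReal) < M) ∧ q.eval (z i) = 0)
    (hexact : ∀ x : ℝ, a < x → (x : EReal) < M → q.eval x = 0 → ∃ i, x = z i) :
    {i : Fin N | q.derivative.eval (z i) < 0}.ncard ≤ (N + 1) / 2 := by
  refine ncard_le_of_forall_ne_succ fun i hi j hj hji ↦ ?_
  have hij : z i < z j := hmono (Fin.lt_def.mpr (by omega))
  obtain ⟨x, ⟨hix, hxj⟩, hx⟩ := exists_root_between_of_deriv_neg hij
    q.continuous.continuousOn (hroots i).2.2 (hroots j).2.2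
    (by rwa [Polynomial.deriv]) (by rwa [Polynomial.deriv])
  obtain ⟨k, rfl⟩ := hexact x ((hroots i).1.trans hix)
    ((EReal.coe_lt_coe_iff.mpr hxj).trans (hroots j).2.1) hx
  have hik := Fin.lt_def.mp (hmono.lt_iff_lt.mp hix)
  have hkj := Fin.lt_def.mp (hmono.lt_iff_lt.mp hxj)
  omega
end

section
/- Let q_κ(x) be a polynomial in x depending polynomially on a parameter κ ∈ ℝ^m, and suppose q_{κ*} has exactly N real roots in an open interval (a, M), among which v roots have even multiplicity and N - v roots are simple or of odd multiplicity. Assume for each even-multiplicity root the even-split perturbation property holds (small one-sided perturbation of a single coordinate κ_ℓ produces two simple roots near it or none) and for each odd root the odd-persistence property holds (small perturbations in both directions produce one simple nearby root). Then for every ε > 0 there exists a perturbed parameter κ arbitrarily close to κ* such that q_κ has at least 2⌈v/2⌉ + (N - v) simple real roots in (a, M). -/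
/-!
Each even-multiplicity root `z i` comes with its own direction `sign δᵢ` in which a small
perturbation of `κ ℓ` splits it into two simple roots; by pigeonhole at least `⌈v/2⌉` of
them share one direction `s`. Perturbing `κ ℓ` by `s t` with `t > 0` small enough for all
roots at once splits those roots, while every odd root persists as a simple root in either
direction. Working inside pairwise disjoint balls around the `z i` contained in `(a, M)`,
all these simple roots are distinct, so there are at least `2⌈v/2⌉ + (N - v)` of them.
-/

open Filter Topology Metric Finset Polynomial Function

lemma exists_sign_card_filter_ge {ι : Type*} (E : Finset ι) {δ : ι → ℝ}
    (hδ : ∀ i ∈ E, δ i ≠ 0) :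
    ∃ s : ℝ, (s = 1 ∨ s = -1) ∧ (#E + 1) / 2 ≤ #{i ∈ E | Real.sign (δ i) = s} := by
  have hsplit := E.card_filter_add_card_filter_not (fun i => Real.sign (δ i) = 1)
  have hneg : {i ∈ E | ¬Real.sign (δ i) = 1} = {i ∈ E | Real.sign (δ i) = -1} :=
    filter_congr fun i hi => by
      rcases Real.sign_apply_eq_of_ne_zero _ (hδ i hi) with h | h <;> norm_num [h]
  by_cases h : (#E + 1) / 2 ≤ #{i ∈ E | Real.sign (δ i) = 1}
  · exact ⟨1, Or.inl rfl, h⟩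
  · exact ⟨-1, Or.inr rfl, by rw [← hneg]; omega⟩

lemma exists_pos_ball_subset_pairwise_disjoint {α ι : Type*} [MetricSpace α] [Finite ι]
    {c : ι → α} (hc : Injective c) {U : Set α} (hU : IsOpen U) (hcU : ∀ i, c i ∈ U) :
    ∃ r > 0, (∀ i, ball (c i) r ⊆ U) ∧ Pairwise (Disjoint on fun i => ball (c i) r) := by
  have hsub : ∀ i, ∀ᶠ r in 𝓝[>] (0 : ℝ), ball (c i) r ⊆ U := fun i => by
    obtain ⟨r₀, hr₀, hball⟩ := Metric.isOpen_iff.1 hU _ (hcU i)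
    filter_upwards [Ioo_mem_nhdsGT hr₀] with r hr using (ball_subset_ball hr.2.le).trans hball
  have hdisj : ∀ i j, ∀ᶠ r in 𝓝[>] (0 : ℝ), i ≠ j → Disjoint (ball (c i) r) (ball (c j) r) :=
    fun i j => eventually_imp_distrib_left.2 fun hij => by
      filter_upwards [Ioo_mem_nhdsGT (half_pos (dist_pos.2 (hc.ne hij)))] with r hr
      exact ball_disjoint_ball (by linarith [hr.2])
  exact (eventually_mem_nhdsWithin.and ((eventually_all.2 hsub).and
    (eventually_all.2 fun i => eventually_all.2 (hdisj i)))).exists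

lemma sum_ncard_inter_le_ncard {α ι : Type*} {G : Set α} (hG : G.Finite) {B : ι → Set α}
    {T : Finset ι} (hB : (T : Set ι).PairwiseDisjoint B) :
    ∑ i ∈ T, (G ∩ B i).ncard ≤ G.ncard := by
  rw [← finsum_mem_coe_finset, ← T.finite_toSet.ncard_biUnion (fun i _ => hG.inter_of_left _)
    (hB.mono fun i => Set.inter_subset_right)]
  exact Set.ncard_le_ncard (Set.iUnion₂_subset fun i _ => Set.inter_subset_left) hG

lemma two_mul_card_add_card_le_ncard {α ι : Type*} [DecidableEq ι] {G : Set α} (hG : G.Finite)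
    {B : ι → Set α} (hB : Pairwise (Disjoint on B)) {S O : Finset ι} (hSO : Disjoint S O)
    (hS : ∀ i ∈ S, 1 < (G ∩ B i).ncard) (hO : ∀ i ∈ O, (G ∩ B i).Nonempty) :
    2 * #S + #O ≤ G.ncard :=
  calc 2 * #S + #O = ∑ i ∈ S, 2 + ∑ i ∈ O, 1 := by simp [mul_comm]
    _ ≤ ∑ i ∈ S, (G ∩ B i).ncard + ∑ i ∈ O, (G ∩ B i).ncard :=
      add_le_add (sum_le_sum hS) (sum_le_sum fun i hi =>
        (Set.ncard_pos (hG.inter_of_left _)).2 (hO i hi))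
    _ = ∑ i ∈ S ∪ O, (G ∩ B i).ncard := (sum_union hSO).symm
    _ ≤ G.ncard := sum_ncard_inter_le_ncard hG (hB.set_pairwise _)

def simpleRootSet {R : Type*} [CommRing R] (p : R[X]) : Set R :=
  {x | p.eval x = 0 ∧ p.derivative.eval x ≠ 0}

lemma finite_simpleRootSet {R : Type*} [CommRing R] [IsDomain R] (p : R[X]) :
    (simpleRootSet p).Finite := by
  rcases eq_or_ne p 0 with rfl | hp
  · simp [simpleRootSet]
  · exact (finite_setOfPred_isRoot hp).subset fun x hx => hx.1

lemma eventually_two_mul_card_add_card_le_ncard {β R ι : Type*} [CommRing R] [IsDomain R]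
    [PseudoMetricSpace R] [DecidableEq ι] {l : Filter β} {p : β → R[X]} {U : Set R}
    {c : ι → R} {r : ℝ} (hcU : ∀ i, ball (c i) r ⊆ U)
    (hdisj : Pairwise (Disjoint on fun i => ball (c i) r)) {S O : Finset ι} (hSO : Disjoint S O)
    (hS : ∀ i ∈ S, ∀ᶠ t in l, ∃ y₁ y₂, y₁ ≠ y₂ ∧ dist y₁ (c i) < r ∧ dist y₂ (c i) < r ∧
      ∀ y ∈ ({y₁, y₂} : Set R), y ∈ simpleRootSet (p t))
    (hO : ∀ i ∈ O, ∀ᶠ t in l, ∃ y, dist y (c i) < r ∧ y ∈ simpleRootSet (p t)) :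
    ∀ᶠ t in l, 2 * #S + #O ≤ (U ∩ simpleRootSet (p t)).ncard := by
  filter_upwards [(eventually_all_finset S).2 hS, (eventually_all_finset O).2 hO] with t hSt hOt
  have hfin := (finite_simpleRootSet (p t)).inter_of_right U
  refine two_mul_card_add_card_le_ncard hfin hdisj hSO (fun i hi => ?_) fun i hi => ?_
  · obtain ⟨y₁, y₂, hne, h₁, h₂, hy⟩ := hSt i hi
    exact (Set.one_lt_ncard (hfin.inter_of_left _)).2 ⟨y₁, ⟨⟨hcU i h₁, hy y₁ (by simp)⟩, h₁⟩,
      y₂, ⟨⟨hcU i h₂, hy y₂ (by simp)⟩, h₂⟩, hne⟩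
  · obtain ⟨y, hyc, hy⟩ := hOt i hi
    exact ⟨y, ⟨hcU i hyc, hy⟩, hyc⟩

lemma abs_update_add_sub_le {ι : Type*} [DecidableEq ι] (x : ι → ℝ) (i : ι) (h : ℝ) (j : ι) :
    |update x i (x i + h) j - x j| ≤ |h| := by
  rcases eq_or_ne j i with rfl | hj
  · simp
  · simp [hj]

lemma Set.Finite.exists_injective_fin_of_le_ncard {α : Type*} {G : Set α} (hG : G.Finite)
    {n : ℕ} (hn : n ≤ G.ncard) : ∃ (K : ℕ) (y : Fin K → α), n ≤ K ∧ Injective y ∧ ∀ j, y j ∈ G := by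
  rw [Set.ncard_eq_toFinset_card G hG] at hn
  exact ⟨_, (↑) ∘ hG.toFinset.equivFin.symm, hn,
    Subtype.val_injective.comp hG.toFinset.equivFin.symm.injective,
    fun j => hG.mem_toFinset.1 (hG.toFinset.equivFin.symm j).2⟩

theorem stmt19_general (m N v : ℕ)
    (q : (Fin m → ℝ) → Polynomial ℝ) (κstar : Fin m → ℝ) (ℓ : Fin m)
    (a : ℝ) (M : EReal) (z : Fin N → ℝ) (hmono : StrictMono z)
    (hroots : ∀ i, a < z i ∧ ((z i : EReal) < M) ∧ (q κstar).eval (z i) = 0)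
    (E : Finset (Fin N)) (hE : E.card = v)
    (hEvenSplit : ∀ i ∈ E, ∀ ε > (0 : ℝ), ∃ δ : ℝ, δ ≠ 0 ∧
      ∀ δ' ∈ Set.Ioo (0 : ℝ) |δ|,
        (∃ y1 y2 : ℝ, y1 ≠ y2 ∧ |y1 - z i| < ε ∧ |y2 - z i| < ε ∧
          (∀ y ∈ ({y1, y2} : Set ℝ),
            (q (Function.update κstar ℓ (κstar ℓ + Real.sign δ * δ'))).eval y = 0 ∧
            (q (Function.update κstar ℓ (κstar ℓ + Real.sign δ * δ'))).derivative.eval y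
              ≠ 0)) ∧
        (∀ y : ℝ, |y - z i| < ε →
          (q (Function.update κstar ℓ (κstar ℓ - Real.sign δ * δ'))).eval y ≠ 0))
    (hOddPersist : ∀ i ∉ E, ∀ ε > (0 : ℝ), ∃ δ > (0 : ℝ),
      ∀ δ' ∈ Set.Ioo (0 : ℝ) δ, ∀ s : ℝ, s = 1 ∨ s = -1 →
        ∃ y : ℝ, |y - z i| < ε ∧
          (q (Function.update κstar ℓ (κstar ℓ + s * δ'))).eval y = 0 ∧
          (q (Function.update κstar ℓ (κstar ℓ + s * δ'))).derivative.eval y ≠ 0) :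
    ∀ ε > (0 : ℝ), ∃ κ : Fin m → ℝ, (∀ j, |κ j - κstar j| < ε) ∧
      ∃ (K : ℕ) (y : Fin K → ℝ), 2 * ((v + 1) / 2) + (N - v) ≤ K ∧
        Function.Injective y ∧
        ∀ j, a < y j ∧ ((y j : EReal) < M) ∧ (q κ).eval (y j) = 0 ∧
          (q κ).derivative.eval (y j) ≠ 0 := by
  intro ε hε
  obtain ⟨r, hr, hrU, hrdisj⟩ := exists_pos_ball_subset_pairwise_disjoint hmono.injective
    (isOpen_Ioi.inter (isOpen_Iio.preimage continuous_coe_real_ereal))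
    fun i => ⟨(hroots i).1, (hroots i).2.1⟩
  choose! δ hδ0 hδ using fun i hi => hEvenSplit i hi r hr
  obtain ⟨s, hs, hS⟩ := exists_sign_card_filter_ge E hδ0
  set S := {i ∈ E | Real.sign (δ i) = s}
  -- The hypotheses are passed as they stand: `dist x y` on `ℝ` unfolds to `|x - y|`.
  have hcount := eventually_two_mul_card_add_card_le_ncard (l := 𝓝[>] 0)
    (p := fun t => q (update κstar ℓ (κstar ℓ + s * t))) (S := S) (O := Eᶜ) hrU hrdisj
    (disjoint_compl_right.mono_left (filter_subset _ E))
    (fun i hi => by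
      obtain ⟨hiE, hsign⟩ := mem_filter.1 hi
      exact (nhdsGT_basis 0).eventually_iff.2
        ⟨|δ i|, abs_pos.2 (hδ0 i hiE), fun t ht => hsign ▸ (hδ i hiE t ht).1⟩)
    (fun i hi => by
      obtain ⟨δ', hδ', h⟩ := hOddPersist i (mem_compl.1 hi) r hr
      exact (nhdsGT_basis 0).eventually_iff.2 ⟨δ', hδ', fun t ht => h t ht s hs⟩)
  obtain ⟨t, ht, htε⟩ := (hcount.and (Ioo_mem_nhdsGT hε)).exists
  have hbound : 2 * ((v + 1) / 2) + (N - v) ≤ 2 * #S + #Eᶜ := by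
    rw [card_compl, Fintype.card_fin]; omega
  obtain ⟨K, y, hK, hy, hyG⟩ :=
    ((finite_simpleRootSet _).inter_of_right _).exists_injective_fin_of_le_ncard (hbound.trans ht)
  refine ⟨_, fun j => (abs_update_add_sub_le _ _ _ j).trans_lt ?_, K, y, hK, hy,
    fun j => ⟨(hyG j).1.1, (hyG j).1.2, (hyG j).2⟩⟩
  rcases hs with rfl | rfl <;> simpa [abs_of_pos htε.1] using htε.2

/-- Combinatorial core of the nondegeneracy theorem: suppose `q κ*` has exactly `N`
roots `z 0 < ... < z (N-1)` in `(a, M)`, of which the `v` roots indexed by `E` have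
even multiplicity and the rest are simple or of odd multiplicity. If each
even-multiplicity root satisfies the even-split perturbation property (a small
one-sided perturbation of the coordinate `κ ℓ` produces two simple nearby roots, and
the opposite perturbation produces none) and each odd root satisfies the
odd-persistence property (small perturbations in either direction produce one simple
nearby root), then for every `ε > 0` there is a parameter `κ` within `ε` of `κ*` such
that `q κ` has at least `2⌈v/2⌉ + (N - v)` simple roots in `(a, M)`. -/
theorem stmt19 (m N v : ℕ) (hvN : v ≤ N) (hN : 0 < N)
    (q : (Fin m → ℝ) → Polynomial ℝ) (κstar : Fin m → ℝ) (ℓ : Fin m)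
    (a : ℝ) (M : EReal) (z : Fin N → ℝ) (hmono : StrictMono z)
    (hroots : ∀ i, a < z i ∧ ((z i : EReal) < M) ∧ (q κstar).eval (z i) = 0)
    (hexact : ∀ x : ℝ, a < x → (x : EReal) < M → (q κstar).eval x = 0 → ∃ i, x = z i)
    (E : Finset (Fin N)) (hE : E.card = v)
    (hEvenMult : ∀ i ∈ E, Even ((q κstar).rootMultiplicity (z i)))
    (hOddMult : ∀ i ∉ E, Odd ((q κstar).rootMultiplicity (z i)))
    (hEvenSplit : ∀ i ∈ E, ∀ ε > (0 : ℝ), ∃ δ : ℝ, δ ≠ 0 ∧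
      ∀ δ' ∈ Set.Ioo (0 : ℝ) |δ|,
        (∃ y1 y2 : ℝ, y1 ≠ y2 ∧ |y1 - z i| < ε ∧ |y2 - z i| < ε ∧
          (∀ y ∈ ({y1, y2} : Set ℝ),
            (q (Function.update κstar ℓ (κstar ℓ + Real.sign δ * δ'))).eval y = 0 ∧
            (q (Function.update κstar ℓ (κstar ℓ + Real.sign δ * δ'))).derivative.eval y
              ≠ 0)) ∧
        (∀ y : ℝ, |y - z i| < ε →
          (q (Function.update κstar ℓ (κstar ℓ - Real.sign δ * δ'))).eval y ≠ 0))
    (hOddPersist : ∀ i ∉ E, ∀ ε > (0 : ℝ), ∃ δ > (0 : ℝ),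
      ∀ δ' ∈ Set.Ioo (0 : ℝ) δ, ∀ s : ℝ, s = 1 ∨ s = -1 →
        ∃ y : ℝ, |y - z i| < ε ∧
          (q (Function.update κstar ℓ (κstar ℓ + s * δ'))).eval y = 0 ∧
          (q (Function.update κstar ℓ (κstar ℓ + s * δ'))).derivative.eval y ≠ 0) :
    ∀ ε > (0 : ℝ), ∃ κ : Fin m → ℝ, (∀ j, |κ j - κstar j| < ε) ∧
      ∃ (K : ℕ) (y : Fin K → ℝ), 2 * ((v + 1) / 2) + (N - v) ≤ K ∧
        Function.Injective y ∧
        ∀ j, a < y j ∧ ((y j : EReal) < M) ∧ (q κ).eval (y j) = 0 ∧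
          (q κ).derivative.eval (y j) ≠ 0 :=
  stmt19_general m N v q κstar ℓ a M z hmono hroots E hE hEvenSplit hOddPersist
end
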